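/- arXiv:2308.06789 — 2 statements merged into one kernel-verified Lean document; each statement's English description precedes it below -/
import Mathlib

section
/- The wevels are well-ordered by membership: membership restricted to wevels is transitive, irreflexive, trichotomous (any two wevels r, s satisfy r ∈ s, r = s, or s ∈ r), and every nonempty definable class of wevels has an ∈-minimal element. -/
/-- `x` is a subset of `r` (with respect to the membership relation `mem`). -/
def wsSub {M : Type*} (mem : M → M → Prop) (x r : M) : Prop :=
  ∀ y, mem y x → mem y r

/-- `x` is found at `r`:  either `x` is bland and `x ⊆ r`, or some wand-tap of a member
of `r` yields `x`. -/
def wsFoundAt {M : Type*} (Bland : M → Prop) (mem : M → M → Prop)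
    (Tap : M → M → M → Prop) (x r : M) : Prop :=
  (Bland x ∧ wsSub mem x r) ∨ ∃ w b, mem b r ∧ Tap w b x

/-- `x ⧏∈ a`: there is `r ∈ a` with `x` found at `r`. -/
def wsFoundIn {M : Type*} (Bland : M → Prop) (mem : M → M → Prop)
    (Tap : M → M → M → Prop) (x a : M) : Prop :=
  ∃ r, wsFoundAt Bland mem Tap x r ∧ mem r a

/-- `p` is (a) `cpot a`: a bland set whose members are exactly those `x` with `x ⧏∈ a`. -/
def wsIsCpot {M : Type*} (Bland : M → Prop) (mem : M → M → Prop)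
    (Tap : M → M → M → Prop) (a p : M) : Prop :=
  Bland p ∧ ∀ x, mem x p ↔ wsFoundIn Bland mem Tap x a

/-- `i` is the (bland) intersection of `a` and `h`. -/
def wsIsInter {M : Type*} (Bland : M → Prop) (mem : M → M → Prop) (a h i : M) : Prop :=
  Bland i ∧ ∀ x, mem x i ↔ (mem x a ∧ mem x h)

/-- `h` is a wistory: bland, and every `a ∈ h` equals `cpot (a ∩ h)`. -/
def wsWistory {M : Type*} (Bland : M → Prop) (mem : M → M → Prop)
    (Tap : M → M → M → Prop) (h : M) : Prop :=
  Bland h ∧ ∀ a, mem a h → ∃ i, wsIsInter Bland mem a h i ∧ wsIsCpot Bland mem Tap i a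

/-- `s` is a wevel: `s = cpot h` for some wistory `h`. -/
def wsWevel {M : Type*} (Bland : M → Prop) (mem : M → M → Prop)
    (Tap : M → M → M → Prop) (s : M) : Prop :=
  ∃ h, wsWistory Bland mem Tap h ∧ wsIsCpot Bland mem Tap h s

/-- `p` is wand-potent: closed under `⧏∈`. -/
def wsWandPotent {M : Type*} (Bland : M → Prop) (mem : M → M → Prop)
    (Tap : M → M → M → Prop) (p : M) : Prop :=
  ∀ x, wsFoundIn Bland mem Tap x p → mem x p

/-- `a` is wand-transitive: every member of `a` is found at `a`. -/
def wsWandTransitive {M : Type*} (Bland : M → Prop) (mem : M → M → Prop)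
    (Tap : M → M → M → Prop) (a : M) : Prop :=
  ∀ x, mem x a → wsFoundAt Bland mem Tap x a

/-- `s` is `wev a`: the `∈`-least wevel at which `a` is found. -/
def wsIsWevOf {M : Type*} (Bland : M → Prop) (mem : M → M → Prop)
    (Tap : M → M → M → Prop) (a s : M) : Prop :=
  wsWevel Bland mem Tap s ∧ wsFoundAt Bland mem Tap a s ∧
    ∀ r, wsWevel Bland mem Tap r → wsFoundAt Bland mem Tap a r → ¬ mem r s

/-!
Cpots, and hence wevels, are bland sets closed under `⧏∈`. Suppose a nonempty class of such sets
has no `∈`-minimal member. Russell's set `R = {y ∈ a₀ | y ∉ y}`, relativised to the intersection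
of the class, is a subset of every member of the class; since each member `a` contains another
member `b`, `R ⧏ b ∈ a` puts `R` into `a`. So `R` lies in the intersection, and `R ∈ R ↔ R ∉ R`.
This gives minimality and irreflexivity. Minimality along a wistory `h` shows that each
`c ∈ a ∈ h` with `c ∈ h` is a subset of `a`, so `a ∩ h` is again a wistory and every member of a
wistory is a wevel. For trichotomy take `s` minimal among wevels incomparable with some wevel,
and `t` minimal among wevels incomparable with `s`: each member of `s` (or `t`) is `⧏` a smaller
wevel comparable with the other one, whence `s ⊆ t ⊆ s`.
-/

section CoreWev

variable {M : Type*} {Bland : M → Prop} {mem : M → M → Prop} {Tap : M → M → M → Prop}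

theorem wsFoundAt.mono {x e c : M} (hx : wsFoundAt Bland mem Tap x e) (hec : wsSub mem e c) :
    wsFoundAt Bland mem Tap x c := by
  rcases hx with ⟨hbx, hxe⟩ | ⟨w, b, hbe, htap⟩
  · exact Or.inl ⟨hbx, fun y hy => hec y (hxe y hy)⟩
  · exact Or.inr ⟨w, b, hec b hbe, htap⟩

theorem wsFoundAt.sub_of_bland (hTap : ∀ w a c, Tap w a c → ¬ Bland c) {x r : M}
    (hx : wsFoundAt Bland mem Tap x r) (hbx : Bland x) : wsSub mem x r := by
  rcases hx with ⟨-, hxr⟩ | ⟨w, b, -, htap⟩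
  · exact hxr
  · exact absurd hbx (hTap w b x htap)

theorem wsFoundAt.trans (hInNB : ∀ x a, mem x a → Bland a)
    (hTap : ∀ w a c, Tap w a c → ¬ Bland c) {x r c : M}
    (hxr : wsFoundAt Bland mem Tap x r) (hrc : wsFoundAt Bland mem Tap r c) :
    wsFoundAt Bland mem Tap x c := by
  rcases hrc with ⟨-, hrc⟩ | ⟨w, b, -, htap⟩
  · exact hxr.mono hrc
  · have hr_empty : ∀ y, ¬ mem y r := fun y hy => hTap w b r htap (hInNB y r hy)
    rcases hxr with ⟨hbx, hxr⟩ | ⟨-, b', hb'r, -⟩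
    · exact Or.inl ⟨hbx, fun y hy => absurd (hxr y hy) (hr_empty y)⟩
    · exact absurd hb'r (hr_empty b')

theorem wsIsCpot.wandPotent (hInNB : ∀ x a, mem x a → Bland a)
    (hTap : ∀ w a c, Tap w a c → ¬ Bland c) {g p : M} (hp : wsIsCpot Bland mem Tap g p) :
    wsWandPotent Bland mem Tap p := by
  rintro x ⟨r, hxr, hrp⟩
  obtain ⟨c, hrc, hcg⟩ := (hp.2 r).1 hrp
  exact (hp.2 x).2 ⟨c, hxr.trans hInNB hTap hrc, hcg⟩

theorem wsIsCpot.congr_left {g g' p : M} (hgg' : ∀ x, mem x g ↔ mem x g')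
    (hp : wsIsCpot Bland mem Tap g p) : wsIsCpot Bland mem Tap g' p :=
  ⟨hp.1, fun x => (hp.2 x).trans (exists_congr fun r => and_congr_right fun _ => hgg' r)⟩

theorem exists_mem_minimal_of_wandPotent
    (hSep : ∀ (φ : M → Prop) a, Bland a → ∃ b, Bland b ∧ ∀ x, mem x b ↔ (mem x a ∧ φ x))
    (ψ : M → Prop) (hψ : ∀ a, ψ a → Bland a ∧ wsWandPotent Bland mem Tap a)
    (hne : ∃ a, ψ a) : ∃ a, ψ a ∧ ∀ b, ψ b → ¬ mem b a := by
  by_contra! hdesc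
  obtain ⟨a₀, ha₀⟩ := hne
  obtain ⟨R, hRb, hR⟩ :=
    hSep (fun y => (∀ a, ψ a → mem y a) ∧ ¬ mem y y) a₀ (hψ a₀ ha₀).1
  have hR_mem : ∀ a, ψ a → mem R a := by
    intro a ha
    obtain ⟨b, hb, hba⟩ := hdesc a ha
    exact (hψ a ha).2 R ⟨b, Or.inl ⟨hRb, fun y hy => ((hR y).1 hy).2.1 b hb⟩, hba⟩
  have hRR : mem R R ↔ ¬ mem R R :=
    (hR R).trans ⟨fun h => h.2.2, fun h => ⟨hR_mem a₀ ha₀, hR_mem, h⟩⟩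
  exact iff_not_self hRR

theorem wsWistory.cpot_of_mem {h a : M} (hh : wsWistory Bland mem Tap h) (ha : mem a h) :
    ∃ i, wsIsCpot Bland mem Tap i a :=
  (hh.2 a ha).imp fun _ hi => hi.2

theorem wsWistory.sub_cpot {h s c : M} (hh : wsWistory Bland mem Tap h)
    (hs : wsIsCpot Bland mem Tap h s) (hc : mem c h) : wsSub mem c s := by
  obtain ⟨i, hi, hci⟩ := hh.2 c hc
  intro y hy
  obtain ⟨r, hyr, hri⟩ := (hci.2 y).1 hy
  exact (hs.2 y).2 ⟨r, hyr, ((hi.2 r).1 hri).2⟩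

theorem wsWistory.mem_cpot {h s c : M} (hh : wsWistory Bland mem Tap h)
    (hs : wsIsCpot Bland mem Tap h s) (hc : mem c h) : mem c s := by
  obtain ⟨i, hci⟩ := hh.cpot_of_mem hc
  exact (hs.2 c).2 ⟨c, Or.inl ⟨hci.1, fun _ hy => hy⟩, hc⟩

theorem wsWistory.sub_of_mem_of_mem (hInNB : ∀ x a, mem x a → Bland a)
    (hTap : ∀ w a c, Tap w a c → ¬ Bland c)
    (hSep : ∀ (φ : M → Prop) a, Bland a → ∃ b, Bland b ∧ ∀ x, mem x b ↔ (mem x a ∧ φ x))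
    {h a c : M} (hh : wsWistory Bland mem Tap h) (ha : mem a h) (hca : mem c a)
    (hch : mem c h) : wsSub mem c a := by
  by_contra hbad
  obtain ⟨x, ⟨hxh, d, hdx, hdh, hdx_sub⟩, hx_min⟩ := exists_mem_minimal_of_wandPotent hSep
    (fun a => mem a h ∧ ∃ c, mem c a ∧ mem c h ∧ ¬ wsSub mem c a)
    (fun a ha => by
      obtain ⟨i, hi⟩ := hh.cpot_of_mem ha.1
      exact ⟨hi.1, hi.wandPotent hInNB hTap⟩)
    ⟨a, ha, c, hca, hch, hbad⟩
  apply hdx_sub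
  intro y hyd
  obtain ⟨i, hi, hdd⟩ := hh.2 d hdh
  obtain ⟨ix, hix, hxx⟩ := hh.2 x hxh
  obtain ⟨e, hye, hei⟩ := (hdd.2 y).1 hyd
  obtain ⟨hed, heh⟩ := (hi.2 e).1 hei
  have hed_sub : wsSub mem e d := by
    by_contra hbad'
    exact hx_min d ⟨hdh, e, hed, heh, hbad'⟩ hdx
  exact (hxx.2 y).2 ⟨d, hye.mono hed_sub, (hix.2 d).2 ⟨hdx, hdh⟩⟩

theorem wsWistory.of_subset
    (hSep : ∀ (φ : M → Prop) a, Bland a → ∃ b, Bland b ∧ ∀ x, mem x b ↔ (mem x a ∧ φ x))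
    {h i : M} (hh : wsWistory Bland mem Tap h) (hi : Bland i) (hih : wsSub mem i h)
    (hclosed : ∀ x y, mem x i → mem y x → mem y h → mem y i) :
    wsWistory Bland mem Tap i := by
  refine ⟨hi, fun x hxi => ?_⟩
  obtain ⟨ix, hix, hxx⟩ := hh.2 x (hih x hxi)
  obtain ⟨j, hjb, hj⟩ := hSep (fun y => mem y i) x hxx.1
  have hj_ix : ∀ y, mem y ix ↔ mem y j := fun y => by
    rw [hix.2, hj]
    exact ⟨fun hy => ⟨hy.1, hclosed x y hxi hy.1 hy.2⟩, fun hy => ⟨hy.1, hih y hy.2⟩⟩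
  exact ⟨j, ⟨hjb, hj⟩, hxx.congr_left hj_ix⟩

theorem wsWistory.wevel_of_mem (hInNB : ∀ x a, mem x a → Bland a)
    (hTap : ∀ w a c, Tap w a c → ¬ Bland c)
    (hSep : ∀ (φ : M → Prop) a, Bland a → ∃ b, Bland b ∧ ∀ x, mem x b ↔ (mem x a ∧ φ x))
    {h a : M} (hh : wsWistory Bland mem Tap h) (ha : mem a h) : wsWevel Bland mem Tap a := by
  obtain ⟨i, hi, hai⟩ := hh.2 a ha
  refine ⟨i, hh.of_subset hSep hi.1 (fun y hy => ((hi.2 y).1 hy).2) ?_, hai⟩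
  intro x y hxi hyx hyh
  obtain ⟨hxa, hxh⟩ := (hi.2 x).1 hxi
  exact (hi.2 y).2 ⟨hh.sub_of_mem_of_mem hInNB hTap hSep ha hxa hxh y hyx, hyh⟩

theorem wsWevel.bland {s : M} (hs : wsWevel Bland mem Tap s) : Bland s :=
  hs.elim fun _ hg => hg.2.1

theorem wsWevel.wandPotent (hInNB : ∀ x a, mem x a → Bland a)
    (hTap : ∀ w a c, Tap w a c → ¬ Bland c) {s : M} (hs : wsWevel Bland mem Tap s) :
    wsWandPotent Bland mem Tap s :=
  hs.elim fun _ hg => hg.2.wandPotent hInNB hTap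

theorem wsWevel.wandTransitive {s : M} (hs : wsWevel Bland mem Tap s) :
    wsWandTransitive Bland mem Tap s := by
  obtain ⟨g, hg, hgs⟩ := hs
  intro x hxs
  obtain ⟨c, hxc, hcg⟩ := (hgs.2 x).1 hxs
  exact hxc.mono (hg.sub_cpot hgs hcg)

theorem wsWevel.sub_of_mem (hTap : ∀ w a c, Tap w a c → ¬ Bland c) {s x : M}
    (hs : wsWevel Bland mem Tap s) (hbx : Bland x) (hxs : mem x s) : wsSub mem x s :=
  (hs.wandTransitive x hxs).sub_of_bland hTap hbx

theorem wsWevel.mem_trans (hTap : ∀ w a c, Tap w a c → ¬ Bland c) {r s t : M}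
    (hs : wsWevel Bland mem Tap s) (ht : wsWevel Bland mem Tap t) (hrs : mem r s)
    (hst : mem s t) : mem r t :=
  ht.sub_of_mem hTap hs.bland hst r hrs

theorem wsWevel.exists_minimal (hInNB : ∀ x a, mem x a → Bland a)
    (hTap : ∀ w a c, Tap w a c → ¬ Bland c)
    (hSep : ∀ (φ : M → Prop) a, Bland a → ∃ b, Bland b ∧ ∀ x, mem x b ↔ (mem x a ∧ φ x))
    (φ : M → Prop) (hne : ∃ s, wsWevel Bland mem Tap s ∧ φ s) :
    ∃ s, wsWevel Bland mem Tap s ∧ φ s ∧ ∀ r, wsWevel Bland mem Tap r → mem r s → ¬ φ r := by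
  obtain ⟨s, ⟨hs, hφs⟩, hmin⟩ := exists_mem_minimal_of_wandPotent hSep
    (fun s => wsWevel Bland mem Tap s ∧ φ s)
    (fun s hs => ⟨hs.1.bland, hs.1.wandPotent hInNB hTap⟩) hne
  exact ⟨s, hs, hφs, fun r hr hrs hφr => hmin r ⟨hr, hφr⟩ hrs⟩

theorem wsWevel.not_mem_self (hInNB : ∀ x a, mem x a → Bland a)
    (hTap : ∀ w a c, Tap w a c → ¬ Bland c)
    (hSep : ∀ (φ : M → Prop) a, Bland a → ∃ b, Bland b ∧ ∀ x, mem x b ↔ (mem x a ∧ φ x))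
    {s : M} (hs : wsWevel Bland mem Tap s) : ¬ mem s s := by
  intro hss
  obtain ⟨s, hs, rfl, hmin⟩ := exists_minimal hInNB hTap hSep (· = s) ⟨s, hs, rfl⟩
  exact hmin s hs hss rfl

theorem wsWevel.sub_of_forall_mem_comparable (hInNB : ∀ x a, mem x a → Bland a)
    (hTap : ∀ w a c, Tap w a c → ¬ Bland c)
    (hSep : ∀ (φ : M → Prop) a, Bland a → ∃ b, Bland b ∧ ∀ x, mem x b ↔ (mem x a ∧ φ x))
    {s t : M} (ht : wsWevel Bland mem Tap t) (hs : wsWevel Bland mem Tap s) (hst : ¬ mem s t)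
    (hcmp : ∀ c, wsWevel Bland mem Tap c → mem c t → mem c s ∨ c = s ∨ mem s c) :
    wsSub mem t s := by
  obtain ⟨g, hg, hgt⟩ := ht
  intro x hxt
  obtain ⟨c, hxc, hcg⟩ := (hgt.2 x).1 hxt
  have hct : mem c t := hg.mem_cpot hgt hcg
  rcases hcmp c (hg.wevel_of_mem hInNB hTap hSep hcg) hct with hcs | rfl | hsc
  · exact hs.wandPotent hInNB hTap x ⟨c, hxc, hcs⟩
  · exact absurd hct hst
  · exact absurd (hg.sub_cpot hgt hcg s hsc) hst

theorem wsWevel.trichotomous (hInNB : ∀ x a, mem x a → Bland a)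
    (hTap : ∀ w a c, Tap w a c → ¬ Bland c)
    (hExt : ∀ a b, Bland a → Bland b → (∀ x, mem x a ↔ mem x b) → a = b)
    (hSep : ∀ (φ : M → Prop) a, Bland a → ∃ b, Bland b ∧ ∀ x, mem x b ↔ (mem x a ∧ φ x))
    {r₀ s₀ : M} (hr₀ : wsWevel Bland mem Tap r₀) (hs₀ : wsWevel Bland mem Tap s₀) :
    mem r₀ s₀ ∨ r₀ = s₀ ∨ mem s₀ r₀ := by
  by_contra hrs₀
  obtain ⟨s, hs, ⟨t₀, ht₀, hst₀⟩, hs_min⟩ := exists_minimal hInNB hTap hSep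
    (fun s => ∃ t, wsWevel Bland mem Tap t ∧ ¬ (mem s t ∨ s = t ∨ mem t s))
    ⟨r₀, hr₀, s₀, hs₀, hrs₀⟩
  obtain ⟨t, ht, hst, ht_min⟩ := exists_minimal hInNB hTap hSep
    (fun t => ¬ (mem s t ∨ s = t ∨ mem t s)) ⟨t₀, ht₀, hst₀⟩
  have hs_sub_t : wsSub mem s t := by
    refine hs.sub_of_forall_mem_comparable hInNB hTap hSep ht (fun h => hst (.inr (.inr h))) ?_
    intro c hc hcs
    by_contra hct
    exact hs_min c hc hcs ⟨t, ht, hct⟩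
  have ht_sub_s : wsSub mem t s := by
    refine ht.sub_of_forall_mem_comparable hInNB hTap hSep hs (fun h => hst (.inl h)) ?_
    intro c hc hct
    rcases not_not.1 (ht_min c hc hct) with hsc | rfl | hcs
    · exact .inr (.inr hsc)
    · exact .inr (.inl rfl)
    · exact .inl hcs
  exact hst (.inr (.inl (hExt s t hs.bland ht.bland fun x => ⟨hs_sub_t x, ht_sub_s x⟩)))

end CoreWev

/-- The wevels are well-ordered by membership: transitive, irreflexive, trichotomous,
and every nonempty definable class of wevels has an ∈-minimal element. -/
theorem wevels_wellordered {M : Type*} (Bland Wand : M → Prop) (mem : M → M → Prop)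
    (Tap : M → M → M → Prop)
    (hInNB : ∀ x a, mem x a → Bland a)
    (hTapNB : ∀ w a c, Tap w a c → Wand w ∧ ¬ Bland c)
    (hExt : ∀ a b, Bland a → Bland b → (∀ x, mem x a ↔ mem x b) → a = b)
    (hSep : ∀ (φ : M → Prop) a, Bland a → ∃ b, Bland b ∧ ∀ x, mem x b ↔ (mem x a ∧ φ x)) :
    (∀ r s t, wsWevel Bland mem Tap r → wsWevel Bland mem Tap s → wsWevel Bland mem Tap t →
      mem r s → mem s t → mem r t) ∧
    (∀ s, wsWevel Bland mem Tap s → ¬ mem s s) ∧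
    (∀ r s, wsWevel Bland mem Tap r → wsWevel Bland mem Tap s →
      (mem r s ∨ r = s ∨ mem s r)) ∧
    (∀ φ : M → Prop, (∃ s, wsWevel Bland mem Tap s ∧ φ s) →
      ∃ s, wsWevel Bland mem Tap s ∧ φ s ∧
        ∀ r, wsWevel Bland mem Tap r → mem r s → ¬ φ r) := by
  have hTap : ∀ w a c, Tap w a c → ¬ Bland c := fun w a c h => (hTapNB w a c h).2
  exact ⟨fun _ _ _ _ hs ht => hs.mem_trans hTap ht,
    fun _ hs => hs.not_mem_self hInNB hTap hSep,
    fun _ _ hr hs => hr.trichotomous hInNB hTap hExt hSep hs,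
    wsWevel.exists_minimal hInNB hTap hSep⟩
end

section
/- In CUS, if b is bland then rank(b) < rank(tap₀(b)), where rank is the ordinal position of the least wevel at which an object is found; indeed rank(b) + 1 = rank(tap₀(b)). -/
def OnlyBlandHaveMembers {M : Type*} (Bland : M → Prop) (mem : M → M → Prop) : Prop :=
  ∀ x a, mem x a → Bland a

def TapsAreNotBland {M : Type*} (Bland : M → Prop) (Tap : M → M → M → Prop) : Prop :=
  ∀ w a c, Tap w a c → ¬ Bland c

def BlandExtensionality {M : Type*} (Bland : M → Prop) (mem : M → M → Prop) : Prop :=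
  ∀ a b, Bland a → Bland b → (∀ x, mem x a ↔ mem x b) → a = b

def BlandSeparation {M : Type*} (Bland : M → Prop) (mem : M → M → Prop) : Prop :=
  ∀ (φ : M → Prop) a, Bland a → ∃ b, Bland b ∧ ∀ x, mem x b ↔ (mem x a ∧ φ x)

section Wevels

variable {M : Type*} {Bland : M → Prop} {mem : M → M → Prop} {Tap : M → M → M → Prop}

theorem wsSub.trans {x y z : M} (hxy : wsSub mem x y) (hyz : wsSub mem y z) :
    wsSub mem x z :=
  fun a ha => hyz a (hxy a ha)

theorem wsFoundAt.mono_s18 {x r r' : M} (h : wsFoundAt Bland mem Tap x r) (hr : wsSub mem r r') :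
    wsFoundAt Bland mem Tap x r' := by
  rcases h with ⟨hx, hxr⟩ | ⟨w, b, hbr, hb⟩
  · exact Or.inl ⟨hx, hxr.trans hr⟩
  · exact Or.inr ⟨w, b, hr b hbr, hb⟩

theorem wsSub_of_foundAt_of_bland (hTap : TapsAreNotBland Bland Tap) {x r : M} (hx : Bland x)
    (h : wsFoundAt Bland mem Tap x r) : wsSub mem x r := by
  rcases h with ⟨_, hxr⟩ | ⟨w, b, _, hb⟩
  · exact hxr
  · exact absurd hx (hTap w b x hb)

theorem wsSub_of_foundAt (hIn : OnlyBlandHaveMembers Bland mem) (hTap : TapsAreNotBland Bland Tap)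
    {x r : M} (h : wsFoundAt Bland mem Tap x r) : wsSub mem x r := by
  by_cases hx : Bland x
  · exact wsSub_of_foundAt_of_bland hTap hx h
  · exact fun y hy => absurd (hIn y x hy) hx

namespace wsWistory

variable {h a : M}

theorem bland_of_mem (hh : wsWistory Bland mem Tap h) (ha : mem a h) : Bland a :=
  let ⟨_, _, hc⟩ := hh.2 a ha
  hc.1

theorem mem_iff (hh : wsWistory Bland mem Tap h) (ha : mem a h) {x : M} :
    mem x a ↔ ∃ u, mem u a ∧ mem u h ∧ wsFoundAt Bland mem Tap x u := by
  obtain ⟨i, hi, hc⟩ := hh.2 a ha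
  simp only [hc.2 x, wsFoundIn, hi.2]
  exact exists_congr fun u => by tauto

/-- Russell's argument: if some `a ∈ h` failed `P`, separate from `a` the set `S` of those
`x ∉ x` lying in every `d ∈ h` that fails `P`; then `S` is found at a `P`-failing member of
each such `d`, so `S ∈ d`, and in particular `S ∈ S ↔ S ∉ S`. -/
theorem induction (hSep : BlandSeparation Bland mem) (hh : wsWistory Bland mem Tap h)
    {P : M → Prop} (ih : ∀ a, mem a h → (∀ x, mem x a → mem x h → P x) → P a) :
    ∀ a, mem a h → P a := by
  by_contra! ⟨a, hah, hPa⟩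
  obtain ⟨S, hSb, hS⟩ :=
    hSep (fun x => (∀ d, mem d h → ¬ P d → mem x d) ∧ ¬ mem x x) a (hh.bland_of_mem hah)
  have hS_mem : ∀ d, mem d h → ¬ P d → mem S d := by
    intro d hdh hPd
    obtain ⟨x, hxd, hxh, hPx⟩ : ∃ x, mem x d ∧ mem x h ∧ ¬ P x := by
      by_contra! hx
      exact hPd (ih d hdh hx)
    exact (hh.mem_iff hdh).2
      ⟨x, hxd, hxh, Or.inl ⟨hSb, fun y hy => ((hS y).1 hy).2.1 x hxh hPx⟩⟩
  have hSS : ¬ mem S S := fun h => ((hS S).1 h).2.2 h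
  exact hSS ((hS S).2 ⟨hS_mem a hah hPa, hS_mem, hSS⟩)

theorem sub_of_mem (hTap : TapsAreNotBland Bland Tap) (hSep : BlandSeparation Bland mem)
    (hh : wsWistory Bland mem Tap h) (ha : mem a h) {x : M} (hxa : mem x a) (hxh : mem x h) :
    wsSub mem x a := by
  refine hh.induction hSep (P := fun a => ∀ x, mem x a → mem x h → wsSub mem x a)
    (fun a ha ih x hxa hxh y hyx => ?_) a ha x hxa hxh
  obtain ⟨r, hrx, hrh, hyr⟩ := (hh.mem_iff hxh).1 hyx
  obtain ⟨s, hsa, hsh, hxs⟩ := (hh.mem_iff ha).1 hxa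
  have hrs : mem r s := wsSub_of_foundAt_of_bland hTap (hh.bland_of_mem hxh) hxs r hrx
  have hra : mem r a :=
    (hh.mem_iff ha).2 ⟨s, hsa, hsh, Or.inl ⟨hh.bland_of_mem hrh, ih s hsa hsh r hrs hrh⟩⟩
  exact (hh.mem_iff ha).2 ⟨r, hra, hrh, hyr⟩

/-- `a ∈ h` is `cpot (a ∩ h)`, and `a ∩ h` is a wistory because each `x ∈ a ∩ h` has
`x ∩ h = x ∩ (a ∩ h)`. -/
theorem wevel_of_mem_s18 (hTap : TapsAreNotBland Bland Tap) (hSep : BlandSeparation Bland mem)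
    (hh : wsWistory Bland mem Tap h) (ha : mem a h) : wsWevel Bland mem Tap a := by
  obtain ⟨i, hi, hc⟩ := hh.2 a ha
  refine ⟨i, ⟨hi.1, fun x hxi => ?_⟩, hc⟩
  obtain ⟨hxa, hxh⟩ := (hi.2 x).1 hxi
  obtain ⟨ix, hix, hcx⟩ := hh.2 x hxh
  refine ⟨ix, ⟨hix.1, fun y => ?_⟩, hcx⟩
  rw [hix.2 y, hi.2 y]
  exact ⟨fun ⟨hyx, hyh⟩ => ⟨hyx, hh.sub_of_mem hTap hSep ha hxa hxh y hyx, hyh⟩,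
    fun ⟨hyx, _, hyh⟩ => ⟨hyx, hyh⟩⟩

end wsWistory

namespace wsIsCpot

variable {h s t : M}

theorem mem_of_mem_wistory (hh : wsWistory Bland mem Tap h) (hs : wsIsCpot Bland mem Tap h s)
    (ht : mem t h) : mem t s :=
  (hs.2 t).2 ⟨t, Or.inl ⟨hh.bland_of_mem ht, fun _ hy => hy⟩, ht⟩

theorem sub_of_mem_wistory (hh : wsWistory Bland mem Tap h) (hs : wsIsCpot Bland mem Tap h s)
    (ht : mem t h) : wsSub mem t s := by
  intro y hyt
  obtain ⟨u, _, huh, hyu⟩ := (hh.mem_iff ht).1 hyt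
  exact (hs.2 y).2 ⟨u, hyu, huh⟩

end wsIsCpot

namespace wsWevel

variable {s t x : M}

theorem bland_s18 (hs : wsWevel Bland mem Tap s) : Bland s :=
  let ⟨_, _, hc⟩ := hs
  hc.1

theorem mem_of_foundIn (hIn : OnlyBlandHaveMembers Bland mem) (hTap : TapsAreNotBland Bland Tap)
    (hs : wsWevel Bland mem Tap s) (hx : wsFoundIn Bland mem Tap x s) : mem x s := by
  obtain ⟨h, _, hc⟩ := hs
  obtain ⟨r, hxr, hrs⟩ := hx
  obtain ⟨t, hrt, hth⟩ := (hc.2 r).1 hrs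
  exact (hc.2 x).2 ⟨t, hxr.mono_s18 (wsSub_of_foundAt hIn hTap hrt), hth⟩

theorem sub_of_mem_s18 (hIn : OnlyBlandHaveMembers Bland mem) (hTap : TapsAreNotBland Bland Tap)
    (hs : wsWevel Bland mem Tap s) (hx : mem x s) : wsSub mem x s := by
  obtain ⟨h, hh, hc⟩ := hs
  obtain ⟨t, hxt, hth⟩ := (hc.2 x).1 hx
  exact (wsSub_of_foundAt hIn hTap hxt).trans (hc.sub_of_mem_wistory hh hth)

/-- Reduced to `wsWistory.induction` for "every wevel `r ⊆ t` satisfies `P`", over the members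
`t` of the wistory of `s`. -/
theorem induction (hTap : TapsAreNotBland Bland Tap) (hSep : BlandSeparation Bland mem)
    {P : M → Prop} (ih : ∀ s, wsWevel Bland mem Tap s → (∀ r, wsWevel Bland mem Tap r →
      mem r s → P r) → P s) (hs : wsWevel Bland mem Tap s) : P s := by
  obtain ⟨h, hh, hc⟩ := id hs
  have below : ∀ t, mem t h → ∀ r, wsWevel Bland mem Tap r → wsSub mem r t → P r := by
    refine hh.induction hSep fun t hth iht r hr hrt => ih r hr fun q hq hqr => ?_
    obtain ⟨u, hut, huh, hqu⟩ := (hh.mem_iff hth).1 (hrt q hqr)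
    exact iht u hut huh q hq (wsSub_of_foundAt_of_bland hTap hq.bland_s18 hqu)
  refine ih s hs fun r hr hrs => ?_
  obtain ⟨t, hrt, hth⟩ := (hc.2 r).1 hrs
  exact below t hth r hr (wsSub_of_foundAt_of_bland hTap hr.bland_s18 hrt)

theorem sub_of_not_mem (hIn : OnlyBlandHaveMembers Bland mem) (hTap : TapsAreNotBland Bland Tap)
    (hSep : BlandSeparation Bland mem) (hs : wsWevel Bland mem Tap s)
    (ht : wsWevel Bland mem Tap t)
    (hcomp : ∀ u, wsWevel Bland mem Tap u → mem u s → mem u t ∨ u = t ∨ mem t u)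
    (hts : ¬ mem t s) : wsSub mem s t := by
  intro x hxs
  obtain ⟨h, hh, hc⟩ := id hs
  obtain ⟨u, hxu, huh⟩ := (hc.2 x).1 hxs
  have hus : mem u s := hc.mem_of_mem_wistory hh huh
  rcases hcomp u (hh.wevel_of_mem_s18 hTap hSep huh) hus with hut | rfl | htu
  · exact ht.mem_of_foundIn hIn hTap ⟨u, hxu, hut⟩
  · exact absurd hus hts
  · exact absurd (hs.sub_of_mem_s18 hIn hTap hus t htu) hts

theorem trichotomous_s18 (hIn : OnlyBlandHaveMembers Bland mem) (hTap : TapsAreNotBland Bland Tap)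
    (hExt : BlandExtensionality Bland mem) (hSep : BlandSeparation Bland mem)
    (hs : wsWevel Bland mem Tap s) (ht : wsWevel Bland mem Tap t) :
    mem s t ∨ s = t ∨ mem t s := by
  refine hs.induction hTap hSep (P := fun s => ∀ t, wsWevel Bland mem Tap t →
    mem s t ∨ s = t ∨ mem t s) (fun s hs ihs t ht => ?_) t ht
  refine ht.induction hTap hSep (P := fun t => mem s t ∨ s = t ∨ mem t s) fun t ht iht => ?_
  by_cases hst : mem s t
  · exact Or.inl hst
  by_cases hts : mem t s
  · exact Or.inr (Or.inr hts)
  refine Or.inr (Or.inl (hExt s t hs.bland_s18 ht.bland_s18 fun x => ⟨fun hx => ?_, fun hx => ?_⟩))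
  · exact hs.sub_of_not_mem hIn hTap hSep ht (fun u hu hus => ihs u hu hus t ht) hts x hx
  · refine ht.sub_of_not_mem hIn hTap hSep hs (fun v hv hvt => ?_) hst x hx
    rcases iht v hv hvt with h | rfl | h
    exacts [Or.inr (Or.inr h), Or.inr (Or.inl rfl), Or.inl h]

end wsWevel

theorem wsIsWevOf.mem_of_mem (hIn : OnlyBlandHaveMembers Bland mem)
    (hTap : TapsAreNotBland Bland Tap) (hExt : BlandExtensionality Bland mem)
    (hSep : BlandSeparation Bland mem) {b sb s : M} (hb : Bland b)
    (hsb : wsIsWevOf Bland mem Tap b sb) (hs : wsWevel Bland mem Tap s) (hbs : mem b s) :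
    mem sb s := by
  obtain ⟨h, hh, hc⟩ := id hs
  obtain ⟨t, hbt, hth⟩ := (hc.2 b).1 hbs
  have ht : wsWevel Bland mem Tap t := hh.wevel_of_mem_s18 hTap hSep hth
  have hts : mem t s := hc.mem_of_mem_wistory hh hth
  rcases hsb.1.trichotomous_s18 hIn hTap hExt hSep ht with hsbt | rfl | htsb
  · exact hs.sub_of_mem_s18 hIn hTap hts sb hsbt
  · exact hts
  · exact absurd htsb (hsb.2.2 t ht (Or.inl ⟨hb, wsSub_of_foundAt_of_bland hTap hb hbt⟩))

end Wevels

theorem wsFoundAt_iff_mem_of_tap_zero {M : Type*} {Bland Wand : M → Prop} {mem : M → M → Prop}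
    {Tap : M → M → M → Prop} {wd : ℕ → M}
    (hTapNB : ∀ w a c, Tap w a c → Wand w ∧ ¬ Bland c)
    (hWands : ∀ w, Wand w ↔ ∃ n, w = wd n)
    (hComp1 : ∀ a b c, Tap (wd 0) a c → Tap (wd 0) b c → a = b)
    (hCard2 : ∀ m a b c d, 0 < m → Bland b → Tap (wd m) a c → Tap (wd 0) b d → c ≠ d)
    {b c r : M} (hb : Bland b) (hc : Tap (wd 0) b c) :
    wsFoundAt Bland mem Tap c r ↔ mem b r := by
  refine ⟨?_, fun hbr => Or.inr ⟨wd 0, b, hbr, hc⟩⟩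
  rintro (⟨hcb, _⟩ | ⟨w, a, har, hac⟩)
  · exact absurd hcb (hTapNB _ _ _ hc).2
  obtain ⟨n, rfl⟩ := (hWands w).1 (hTapNB _ _ _ hac).1
  rcases Nat.eq_zero_or_pos n with rfl | hn
  · rwa [hComp1 a b c hac hc] at har
  · exact absurd rfl (hCard2 n a b c c hn hb hac hc)

theorem cus_rank_tap0_general {M : Type*} (Bland Wand : M → Prop) (mem : M → M → Prop)
    (Tap : M → M → M → Prop) (wd : ℕ → M) (E : ℕ → M → M → Prop)
    -- quasi-notational axioms
    (hInNB : ∀ x a, mem x a → Bland a)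
    (hTapNB : ∀ w a c, Tap w a c → Wand w ∧ ¬ Bland c)
    -- bland-set axioms
    (hExt : ∀ a b, Bland a → Bland b → (∀ x, mem x a ↔ mem x b) → a = b)
    (hSep : ∀ (φ : M → Prop) a, Bland a → ∃ b, Bland b ∧ ∀ x, mem x b ↔ (mem x a ∧ φ x))
    -- (Wands_C): the wands are exactly the finite ordinals, represented by `wd : ℕ → M`
    (hWands : ∀ w, Wand w ↔ ∃ n, w = wd n)
    -- (Making_C), with `E n a b` Church's n-equivalence a ≈ₙ b
    (hMake : ∀ n a, (∃ c, Tap (wd n) a c) ↔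
      ((n = 0 ∧ ∀ b, Bland b → ¬ Tap (wd 0) b a) ∨ (0 < n ∧ E n a a)))
    -- (Comp1): tap₀ is injective
    (hComp1 : ∀ a b c, Tap (wd 0) a c → Tap (wd 0) b c → a = b)
    -- (Card2)
    (hCard2 : ∀ m a b c d, 0 < m → Bland b →
      Tap (wd m) a c → Tap (wd 0) b d → c ≠ d) :
    ∀ b, Bland b → ∃ c, Tap (wd 0) b c ∧
      ∀ sb sc, wsIsWevOf Bland mem Tap b sb → wsIsWevOf Bland mem Tap c sc →
        mem sb sc ∧ ∀ r, wsWevel Bland mem Tap r → mem sb r → ¬ mem r sc := by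
  intro b hb
  have hTap : TapsAreNotBland Bland Tap := fun w a c h => (hTapNB w a c h).2
  obtain ⟨c, hc⟩ : ∃ c, Tap (wd 0) b c :=
    (hMake 0 b).2 (Or.inl ⟨rfl, fun b' _ h => hTap _ _ _ h hb⟩)
  have hfound : ∀ r, wsFoundAt Bland mem Tap c r ↔ mem b r := fun r =>
    wsFoundAt_iff_mem_of_tap_zero hTapNB hWands hComp1 hCard2 hb hc
  refine ⟨c, hc, fun sb sc hsb hsc => ⟨?_, fun r hr hsbr hrsc => ?_⟩⟩
  · exact hsb.mem_of_mem hInNB hTap hExt hSep hb hsc.1 ((hfound sc).1 hsc.2.1)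
  · have hbr : mem b r := hr.mem_of_foundIn hInNB hTap ⟨sb, hsb.2.1, hsbr⟩
    exact hsc.2.2 r hr ((hfound r).2 hbr) hrsc

/-- In CUS, for bland b, tap₀(b) exists and rank(b) < rank(tap₀(b)); indeed
rank(b) + 1 = rank(tap₀(b)).  Ranks are expressed via least wevels: wev(b) ∈ wev(tap₀ b),
and wev(tap₀ b) is the immediate successor wevel of wev(b). -/
theorem cus_rank_tap0 {M : Type*} (Bland Wand : M → Prop) (mem : M → M → Prop)
    (Tap : M → M → M → Prop) (wd : ℕ → M) (E : ℕ → M → M → Prop)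
    -- quasi-notational axioms
    (hInNB : ∀ x a, mem x a → Bland a)
    (hTapNB : ∀ w a c, Tap w a c → Wand w ∧ ¬ Bland c)
    (hTapFun : ∀ w a c d, Tap w a c → Tap w a d → c = d)
    -- bland-set axioms
    (hExt : ∀ a b, Bland a → Bland b → (∀ x, mem x a ↔ mem x b) → a = b)
    (hSep : ∀ (φ : M → Prop) a, Bland a → ∃ b, Bland b ∧ ∀ x, mem x b ↔ (mem x a ∧ φ x))
    -- (Wands_C): the wands are exactly the finite ordinals, represented by `wd : ℕ → M`
    (hwd : Function.Injective wd)
    (hWands : ∀ w, Wand w ↔ ∃ n, w = wd n)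
    -- (Making_C), with `E n a b` Church's n-equivalence a ≈ₙ b
    (hMake : ∀ n a, (∃ c, Tap (wd n) a c) ↔
      ((n = 0 ∧ ∀ b, Bland b → ¬ Tap (wd 0) b a) ∨ (0 < n ∧ E n a a)))
    -- (Comp1): tap₀ is injective
    (hComp1 : ∀ a b c, Tap (wd 0) a c → Tap (wd 0) b c → a = b)
    -- (Comp2)
    (hComp2 : ∀ a, ¬ Bland a → (∀ b, Bland b → ¬ Tap (wd 0) b a) →
      ∃ b, Tap (wd 0) a b ∧ Tap (wd 0) b a)
    -- (Card1)
    (hCard1 : ∀ m n a b c d, 0 < m → 0 < n →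
      Tap (wd m) a c → Tap (wd n) b d → (c = d ↔ (m = n ∧ E m a b)))
    -- (Card2)
    (hCard2 : ∀ m a b c d, 0 < m → Bland b →
      Tap (wd m) a c → Tap (wd 0) b d → c ≠ d)
    -- (Card3)
    (hCard3 : ∀ m n a b c d e, 0 < m → 0 < n →
      Tap (wd m) a c → Tap (wd n) b d → Tap (wd 0) d e → c ≠ e)
    -- every non-bland object is obtained from a bland one by finitely many wand-taps
    (hFund : ∀ a, ¬ Bland a → ∃ (k : ℕ) (f : ℕ → M), Bland (f 0) ∧ f k = a ∧
      ∀ i < k, ∃ n, Tap (wd n) (f i) (f (i + 1)))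
    -- (Strat): every object is found at some wevel
    (hStrat : ∀ a, ∃ s, wsWevel Bland mem Tap s ∧ wsFoundAt Bland mem Tap a s) :
    ∀ b, Bland b → ∃ c, Tap (wd 0) b c ∧
      ∀ sb sc, wsIsWevOf Bland mem Tap b sb → wsIsWevOf Bland mem Tap c sc →
        mem sb sc ∧ ∀ r, wsWevel Bland mem Tap r → mem sb r → ¬ mem r sc :=
  cus_rank_tap0_general Bland Wand mem Tap wd E hInNB hTapNB hExt hSep hWands hMake hComp1 hCard2
end
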